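/- arXiv:0706.3158 — 3 statements merged into one kernel-verified Lean document; each statement's English description precedes it below -/
import Mathlib

section
/- For every angle θ and real numbers λ₁, λ₂ with λ₁² + λ₂² = 1, the 1-form ω = λ₁ω₁ + λ₂ω₂ on the 3-torus, where ω₁ = cos(nθ₁)dθ₂ + sin(nθ₁)dθ₃ and ω₂ = -sin(nθ₁)dθ₂ + cos(nθ₁)dθ₃ for a positive integer n, satisfies ω ∧ dω = -n dθ₁ ∧ dθ₂ ∧ dθ₃; in particular every such ω is a contact form and all elements of the circle define the same volume form. -/
/-!
Writing `ω = f(θ₁) dθ₂ + g(θ₁) dθ₃`, one finds `ω ∧ dω = (g f' - f g') dθ₁ ∧ dθ₂ ∧ dθ₃`.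
For `ω = λ₁ω₁ + λ₂ω₂` the pair `(f, g)` is the vector `(λ₁, λ₂)` rotated by the angle `nθ₁`,
so `f' = -n g`, `g' = n f` and `g f' - f g' = -n (f² + g²) = -n (λ₁² + λ₂²) = -n`.
-/

/-- Points of the 3-torus `(ℝ/2πℤ)³`, represented by their angular coordinates
`(θ₁, θ₂, θ₃) ∈ ℝ³` (all forms below are `2π`-periodic, so they descend). -/
abbrev T3Pt := Fin 3 → ℝ

/-- Exterior derivative of a 1-form on `ℝ³` (a 1-form being given by its
pointwise value on tangent vectors): `dω_x(u,v) = ∂_u(ω(v)) - ∂_v(ω(u))`. -/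
noncomputable def dform (ω : T3Pt → T3Pt → ℝ) (x u v : T3Pt) : ℝ :=
  fderiv ℝ (fun y => ω y v) x u - fderiv ℝ (fun y => ω y u) x v

/-- Wedge of a 1-form with a 2-form on `ℝ³`. -/
def wedge12 (α : T3Pt → T3Pt → ℝ) (B : T3Pt → T3Pt → T3Pt → ℝ)
    (x u v w : T3Pt) : ℝ :=
  α x u * B x v w - α x v * B x u w + α x w * B x u v

open Real

def planeForm (f g : ℝ → ℝ) (x u : T3Pt) : ℝ :=
  f (x 0) * u 1 + g (x 0) * u 2

theorem fderiv_planeForm_apply {f g : ℝ → ℝ} {x : T3Pt} (hf : DifferentiableAt ℝ f (x 0))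
    (hg : DifferentiableAt ℝ g (x 0)) (u v : T3Pt) :
    fderiv ℝ (fun y => planeForm f g y u) x v
      = (deriv f (x 0) * u 1 + deriv g (x 0) * u 2) * v 0 := by
  have hproj := hasFDerivAt_apply (𝕜 := ℝ) (0 : Fin 3) x
  have hω : HasFDerivAt (fun y => planeForm f g y u) _ x :=
    ((hf.hasDerivAt.comp_hasFDerivAt x hproj).mul_const (u 1)).add
      ((hg.hasDerivAt.comp_hasFDerivAt x hproj).mul_const (u 2))
  rw [hω.fderiv]
  simp only [add_apply, smul_apply, ContinuousLinearMap.proj_apply, smul_eq_mul]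
  ring

theorem wedge12_dform_planeForm {f g : ℝ → ℝ} {x : T3Pt} (hf : DifferentiableAt ℝ f (x 0))
    (hg : DifferentiableAt ℝ g (x 0)) :
    wedge12 (planeForm f g) (dform (planeForm f g)) x
        (Pi.single 0 1) (Pi.single 1 1) (Pi.single 2 1)
      = g (x 0) * deriv f (x 0) - f (x 0) * deriv g (x 0) := by
  simp only [wedge12, dform, fderiv_planeForm_apply hf hg]
  simp [planeForm, neg_add_eq_sub]

theorem hasDerivAt_rotate_fst (c a b t : ℝ) :
    HasDerivAt (fun t => a * cos (c * t) - b * sin (c * t))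
      (-c * (a * sin (c * t) + b * cos (c * t))) t := by
  have hct : HasDerivAt (fun t => c * t) c t := by simpa using (hasDerivAt_id t).const_mul c
  exact ((hct.cos.const_mul a).sub (hct.sin.const_mul b)).congr_deriv (by ring)

theorem hasDerivAt_rotate_snd (c a b t : ℝ) :
    HasDerivAt (fun t => a * sin (c * t) + b * cos (c * t))
      (c * (a * cos (c * t) - b * sin (c * t))) t := by
  have hct : HasDerivAt (fun t => c * t) c t := by simpa using (hasDerivAt_id t).const_mul c
  exact ((hct.sin.const_mul a).add (hct.cos.const_mul b)).congr_deriv (by ring)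

theorem wedge12_dform_planeForm_rotate (c a b : ℝ) (x : T3Pt) :
    wedge12
        (planeForm (fun t => a * cos (c * t) - b * sin (c * t))
          (fun t => a * sin (c * t) + b * cos (c * t)))
        (dform (planeForm (fun t => a * cos (c * t) - b * sin (c * t))
          (fun t => a * sin (c * t) + b * cos (c * t))))
        x (Pi.single 0 1) (Pi.single 1 1) (Pi.single 2 1)
      = -c * (a ^ 2 + b ^ 2) := by
  have hf := hasDerivAt_rotate_fst c a b (x 0)
  have hg := hasDerivAt_rotate_snd c a b (x 0)
  rw [wedge12_dform_planeForm hf.differentiableAt hg.differentiableAt, hf.deriv, hg.deriv]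
  linear_combination (-c * (a ^ 2 + b ^ 2)) * sin_sq_add_cos_sq (c * x 0)

/-- for `ω₁ = cos(nθ₁)dθ₂ + sin(nθ₁)dθ₃`,
`ω₂ = -sin(nθ₁)dθ₂ + cos(nθ₁)dθ₃` on the 3-torus and any `λ₁² + λ₂² = 1`, the
form `ω = λ₁ω₁ + λ₂ω₂` satisfies `ω ∧ dω = -n dθ₁∧dθ₂∧dθ₃` (as 3-forms, i.e.
evaluated on the coordinate frame); in particular `ω ∧ dω` is nowhere zero (so
`ω` is a contact form) and is independent of `(λ₁, λ₂)` (the circle is taut). -/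
theorem torus_taut_contact_circle (n : ℕ) (hn : 0 < n) (l₁ l₂ : ℝ)
    (hl : l₁ ^ 2 + l₂ ^ 2 = 1) (ω₁ ω₂ ω : T3Pt → T3Pt → ℝ)
    (hω₁ : ω₁ = fun x u => Real.cos (n * x 0) * u 1 + Real.sin (n * x 0) * u 2)
    (hω₂ : ω₂ = fun x u => -Real.sin (n * x 0) * u 1 + Real.cos (n * x 0) * u 2)
    (hω : ω = fun x u => l₁ * ω₁ x u + l₂ * ω₂ x u) :
    ∀ x : T3Pt,
      wedge12 ω (dform ω) x (Pi.single 0 1) (Pi.single 1 1) (Pi.single 2 1)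
          = -(n : ℝ) ∧
      wedge12 ω (dform ω) x (Pi.single 0 1) (Pi.single 1 1) (Pi.single 2 1)
          ≠ 0 := by
  intro x
  have hω_rotate : ω = planeForm (fun t => l₁ * cos (n * t) - l₂ * sin (n * t))
      (fun t => l₁ * sin (n * t) + l₂ * cos (n * t)) := by
    subst hω hω₁ hω₂
    funext y u
    simp only [planeForm]
    ring
  have hvol : wedge12 ω (dform ω) x (Pi.single 0 1) (Pi.single 1 1) (Pi.single 2 1)
      = -(n : ℝ) := by
    rw [hω_rotate, wedge12_dform_planeForm_rotate, hl, mul_one]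
  refine ⟨hvol, ?_⟩
  rw [hvol, neg_ne_zero, Nat.cast_ne_zero]
  exact hn.ne'
end

section
/- Let (X₁, X₂, X₃) be an orthonormal frame on an oriented Riemannian 3-manifold satisfying [X₁,X₂] = cX₃, [X₂,X₃] = kX₁, [X₃,X₁] = kX₂ for constants c, k. Then the sectional curvature of the plane spanned by X = cosθ X₁ + sinθ X₂ and Y = -sinφ sinθ X₁ + sinφ cosθ X₂ + cosφ X₃ equals cos²φ · (c²/4) + sin²φ · (ck - 3c²/4); in particular it is independent of θ, and the extremal sectional curvatures are α = c²/4 for planes containing X₃ and β = ck - 3c²/4 for the plane orthogonal to X₃. -/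
/-- An abstract model of the calculus on a Riemannian `3`-manifold: `A` plays the role
of the algebra of smooth functions, `V` the `A`-module of vector fields, equipped with
the action of vector fields on functions, the Lie bracket, a Riemannian metric `g`, its
Levi-Civita connection `nabla` and the oriented cross product `cross`. -/
structure GeomFrame (A V : Type) [CommRing A] [Algebra ℝ A]
    [AddCommGroup V] [Module A V] where
  act : V → A → A
  bracket : V → V → V
  g : V → V → A
  nabla : V → V → V
  cross : V → V → V
  act_add_left : ∀ (X Y : V) (a : A), act (X + Y) a = act X a + act Y a
  act_smul_left : ∀ (f : A) (X : V) (a : A), act (f • X) a = f * act X a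
  act_add_right : ∀ (X : V) (a b : A), act X (a + b) = act X a + act X b
  act_mul : ∀ (X : V) (a b : A), act X (a * b) = a * act X b + b * act X a
  act_const : ∀ (X : V) (r : ℝ), act X (algebraMap ℝ A r) = 0
  g_symm : ∀ v w, g v w = g w v
  g_add_left : ∀ u v w, g (u + v) w = g u w + g v w
  g_smul_left : ∀ (f : A) (v w : V), g (f • v) w = f * g v w
  bracket_antisymm : ∀ v w, bracket v w = - bracket w v
  bracket_add_left : ∀ u v w, bracket (u + v) w = bracket u w + bracket v w
  bracket_smul_left : ∀ (f : A) (v w : V),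
    bracket (f • v) w = f • bracket v w - act w f • v
  nabla_add_left : ∀ u v w, nabla (u + v) w = nabla u w + nabla v w
  nabla_smul_left : ∀ (f : A) (v w : V), nabla (f • v) w = f • nabla v w
  nabla_add_right : ∀ u v w, nabla u (v + w) = nabla u v + nabla u w
  nabla_smul_right : ∀ (f : A) (v w : V),
    nabla v (f • w) = act v f • w + f • nabla v w
  nabla_metric : ∀ X v w, act X (g v w) = g (nabla X v) w + g v (nabla X w)
  nabla_torsion_free : ∀ v w, nabla v w - nabla w v = bracket v w
  cross_antisymm : ∀ v w, cross v w = - cross w v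
  cross_add_left : ∀ u v w, cross (u + v) w = cross u w + cross v w
  cross_smul_left : ∀ (f : A) (v w : V), cross (f • v) w = f • cross v w

/-- `(X₁, X₂, X₃)` is a positively oriented orthonormal (global) frame. -/
structure GeomFrame.IsONFrame {A V : Type} [CommRing A] [Algebra ℝ A]
    [AddCommGroup V] [Module A V] (F : GeomFrame A V) (X₁ X₂ X₃ : V) : Prop where
  g11 : F.g X₁ X₁ = 1
  g22 : F.g X₂ X₂ = 1
  g33 : F.g X₃ X₃ = 1
  g12 : F.g X₁ X₂ = 0
  g13 : F.g X₁ X₃ = 0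
  g23 : F.g X₂ X₃ = 0
  span : ∀ v : V, v = F.g v X₁ • X₁ + F.g v X₂ • X₂ + F.g v X₃ • X₃
  cross12 : F.cross X₁ X₂ = X₃
  cross23 : F.cross X₂ X₃ = X₁
  cross31 : F.cross X₃ X₁ = X₂

/-- The curvature tensor `R(u,v)w = ∇_u∇_v w - ∇_v∇_u w - ∇_{[u,v]} w`. -/
def GeomFrame.curv {A V : Type} [CommRing A] [Algebra ℝ A]
    [AddCommGroup V] [Module A V] (F : GeomFrame A V) (u v w : V) : V :=
  F.nabla u (F.nabla v w) - F.nabla v (F.nabla u w) - F.nabla (F.bracket u v) w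

/-!
All inner products between fields with constant coefficients in the frame are constant, so on
such fields the Koszul formula expresses `∇` through the structure constants alone. For a frame
with `[X₂,X₃] = λ₁X₁`, `[X₃,X₁] = λ₂X₂`, `[X₁,X₂] = λ₃X₃` this gives Milnor's formula: in frame
coordinates `∇_X Y = (μ ⊙ X) × Y` with `μᵢ = (λ₁ + λ₂ + λ₃)/2 - λᵢ`. The curvature is then a
computation in `ℝ³`, and `g(R(X,Y)Y,X) = ∑ᵢ Kᵢ (X × Y)ᵢ²` with `Kᵢ = μᵢ(μⱼ + μₖ) - μⱼμₖ`.
For `λ = (k, k, c)` one gets `K₁ = K₂ = c²/4`, `K₃ = ck - 3c²/4`, while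
`X × Y = (sin θ cos φ, -cos θ cos φ, sin φ)`.
-/

open Matrix

theorem algebraMap_two_inv_mul_two (A : Type) [CommRing A] [Algebra ℝ A] :
    algebraMap ℝ A 2⁻¹ * 2 = 1 := by
  rw [← map_ofNat (algebraMap ℝ A) 2, ← map_mul, inv_mul_cancel₀ two_ne_zero, map_one]

theorem eq_algebraMap_half_of_two_mul {A : Type} [CommRing A] [Algebra ℝ A] {a : A} {r : ℝ}
    (h : 2 * a = algebraMap ℝ A r) : a = algebraMap ℝ A (r / 2) := by
  rw [div_eq_inv_mul, map_mul, ← h, ← mul_assoc, algebraMap_two_inv_mul_two, one_mul]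

noncomputable def milnorCoeff (l : Fin 3 → ℝ) : Fin 3 → ℝ := fun i => (l 0 + l 1 + l 2) / 2 - l i

noncomputable def milnorNabla (l x y : Fin 3 → ℝ) : Fin 3 → ℝ := (milnorCoeff l * x) ⨯₃ y

noncomputable def milnorCurv (l x y z : Fin 3 → ℝ) : Fin 3 → ℝ :=
  milnorNabla l x (milnorNabla l y z) - milnorNabla l y (milnorNabla l x z) -
    milnorNabla l (l * x ⨯₃ y) z

/-- The sectional curvature of the plane orthogonal to the `i`-th frame vector. -/
noncomputable def milnorSectional (l : Fin 3 → ℝ) (i : Fin 3) : ℝ :=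
  let μ := milnorCoeff l
  μ i * (μ (i + 1) + μ (i + 2)) - μ (i + 1) * μ (i + 2)

theorem milnorCurv_dotProduct (l x y : Fin 3 → ℝ) :
    milnorCurv l x y y ⬝ᵥ x = ∑ i, milnorSectional l i * (x ⨯₃ y) i ^ 2 := by
  simp only [milnorCurv, milnorNabla, milnorSectional, milnorCoeff, cross_apply, dotProduct,
    Fin.sum_univ_three, Pi.mul_apply, Pi.sub_apply, cons_val_zero, cons_val_one, cons_val,
    Fin.reduceAdd]
  ring

namespace GeomFrame

variable {A V : Type} [CommRing A] [Algebra ℝ A] [AddCommGroup V] [Module A V]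
  (F : GeomFrame A V)

theorem g_add_right (u v w : V) : F.g u (v + w) = F.g u v + F.g u w := by
  rw [F.g_symm, F.g_add_left, F.g_symm v, F.g_symm w]

theorem g_smul_right (f : A) (u v : V) : F.g u (f • v) = f * F.g u v := by
  rw [F.g_symm, F.g_smul_left, F.g_symm]

theorem g_sub_left (u v w : V) : F.g (u - v) w = F.g u w - F.g v w := by
  rw [eq_sub_iff_add_eq, ← F.g_add_left, sub_add_cancel]

theorem bracket_add_right (u v w : V) :
    F.bracket u (v + w) = F.bracket u v + F.bracket u w := by
  rw [F.bracket_antisymm, F.bracket_add_left, F.bracket_antisymm v, F.bracket_antisymm w,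
    neg_add, neg_neg, neg_neg]

theorem bracket_algebraMap_smul_left (r : ℝ) (v w : V) :
    F.bracket (algebraMap ℝ A r • v) w = algebraMap ℝ A r • F.bracket v w := by
  rw [F.bracket_smul_left, F.act_const, zero_smul, sub_zero]

theorem bracket_algebraMap_smul_right (r : ℝ) (v w : V) :
    F.bracket v (algebraMap ℝ A r • w) = algebraMap ℝ A r • F.bracket v w := by
  rw [F.bracket_antisymm, bracket_algebraMap_smul_left, F.bracket_antisymm w, smul_neg, neg_neg]

theorem bracket_self (v : V) : F.bracket v v = 0 := by
  have two_smul_eq_zero : (2 : A) • F.bracket v v = 0 := by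
    rw [two_smul]
    nth_rw 2 [F.bracket_antisymm]
    exact add_neg_cancel _
  rw [← one_smul A (F.bracket v v), ← algebraMap_two_inv_mul_two A, mul_smul, two_smul_eq_zero,
    smul_zero]

theorem two_mul_g_nabla (u v w : V) :
    2 * F.g (F.nabla u v) w = F.act u (F.g v w) + F.act v (F.g w u) - F.act w (F.g u v) +
      F.g (F.bracket u v) w - F.g (F.bracket v w) u + F.g (F.bracket w u) v := by
  have torsion (a b c : V) :
      F.g (F.bracket a b) c = F.g (F.nabla a b) c - F.g (F.nabla b a) c := by
    rw [← F.nabla_torsion_free, g_sub_left]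
  rw [F.nabla_metric u, F.nabla_metric v, F.nabla_metric w, torsion, torsion, torsion,
    F.g_symm v (F.nabla u w), F.g_symm w (F.nabla v u), F.g_symm u (F.nabla w v)]
  ring

structure HasMilnorBrackets (X₁ X₂ X₃ : V) (l : Fin 3 → ℝ) : Prop where
  bracket₂₃ : F.bracket X₂ X₃ = algebraMap ℝ A (l 0) • X₁
  bracket₃₁ : F.bracket X₃ X₁ = algebraMap ℝ A (l 1) • X₂
  bracket₁₂ : F.bracket X₁ X₂ = algebraMap ℝ A (l 2) • X₃

section Frame

variable {F} {X₁ X₂ X₃ : V}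

variable (A) in
def frameComb (X₁ X₂ X₃ : V) (x : Fin 3 → ℝ) : V :=
  algebraMap ℝ A (x 0) • X₁ + algebraMap ℝ A (x 1) • X₂ + algebraMap ℝ A (x 2) • X₃

theorem frameComb_sub (x y : Fin 3 → ℝ) :
    frameComb A X₁ X₂ X₃ x - frameComb A X₁ X₂ X₃ y = frameComb A X₁ X₂ X₃ (x - y) := by
  simp only [frameComb, Pi.sub_apply, map_sub, sub_smul]
  abel

theorem g_frameComb (hON : F.IsONFrame X₁ X₂ X₃) (x y : Fin 3 → ℝ) :
    F.g (frameComb A X₁ X₂ X₃ x) (frameComb A X₁ X₂ X₃ y) = algebraMap ℝ A (x ⬝ᵥ y) := by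
  simp only [frameComb, F.g_add_left, F.g_smul_left, g_add_right, g_smul_right, F.g_symm X₂ X₁,
    F.g_symm X₃ X₁, F.g_symm X₃ X₂, hON.g11, hON.g12, hON.g13, hON.g22, hON.g23, hON.g33,
    dotProduct, Fin.sum_univ_three, map_add, map_mul]
  ring

theorem eq_frameComb_of_g (hON : F.IsONFrame X₁ X₂ X₃) {v : V} {n : Fin 3 → ℝ}
    (h : ∀ z, F.g v (frameComb A X₁ X₂ X₃ z) = algebraMap ℝ A (n ⬝ᵥ z)) :
    v = frameComb A X₁ X₂ X₃ n := by
  have h₁ := h ![1, 0, 0]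
  have h₂ := h ![0, 1, 0]
  have h₃ := h ![0, 0, 1]
  simp only [frameComb, cons_val_zero, cons_val_one, cons_val, map_one, map_zero, one_smul,
    zero_smul, add_zero, zero_add, dotProduct, Fin.sum_univ_three, mul_one, mul_zero] at h₁ h₂ h₃
  rw [hON.span v, h₁, h₂, h₃, frameComb]

variable {l : Fin 3 → ℝ}

theorem bracket_frameComb (hl : F.HasMilnorBrackets X₁ X₂ X₃ l) (x y : Fin 3 → ℝ) :
    F.bracket (frameComb A X₁ X₂ X₃ x) (frameComb A X₁ X₂ X₃ y) =
      frameComb A X₁ X₂ X₃ (l * x ⨯₃ y) := by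
  simp only [frameComb, F.bracket_add_left, bracket_add_right, bracket_algebraMap_smul_left,
    bracket_algebraMap_smul_right, bracket_self, F.bracket_antisymm X₂ X₁,
    F.bracket_antisymm X₃ X₂, F.bracket_antisymm X₁ X₃, hl.bracket₁₂, hl.bracket₂₃,
    hl.bracket₃₁, cross_apply, Pi.mul_apply, cons_val_zero, cons_val_one, cons_val, map_mul,
    map_sub]
  module

theorem g_nabla_frameComb (hON : F.IsONFrame X₁ X₂ X₃) (hl : F.HasMilnorBrackets X₁ X₂ X₃ l)
    (x y z : Fin 3 → ℝ) :
    F.g (F.nabla (frameComb A X₁ X₂ X₃ x) (frameComb A X₁ X₂ X₃ y)) (frameComb A X₁ X₂ X₃ z) =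
      algebraMap ℝ A (milnorNabla l x y ⬝ᵥ z) := by
  have koszul := F.two_mul_g_nabla (frameComb A X₁ X₂ X₃ x) (frameComb A X₁ X₂ X₃ y)
    (frameComb A X₁ X₂ X₃ z)
  simp only [g_frameComb hON, F.act_const, bracket_frameComb hl, zero_add, sub_zero, ← map_sub,
    ← map_add] at koszul
  rw [eq_algebraMap_half_of_two_mul koszul]
  congr 1
  simp only [milnorNabla, milnorCoeff, cross_apply, dotProduct, Fin.sum_univ_three, Pi.mul_apply,
    cons_val_zero, cons_val_one, cons_val]
  ring

theorem nabla_frameComb (hON : F.IsONFrame X₁ X₂ X₃) (hl : F.HasMilnorBrackets X₁ X₂ X₃ l)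
    (x y : Fin 3 → ℝ) :
    F.nabla (frameComb A X₁ X₂ X₃ x) (frameComb A X₁ X₂ X₃ y) =
      frameComb A X₁ X₂ X₃ (milnorNabla l x y) :=
  eq_frameComb_of_g hON (g_nabla_frameComb hON hl x y)

theorem curv_frameComb (hON : F.IsONFrame X₁ X₂ X₃) (hl : F.HasMilnorBrackets X₁ X₂ X₃ l)
    (x y z : Fin 3 → ℝ) :
    F.curv (frameComb A X₁ X₂ X₃ x) (frameComb A X₁ X₂ X₃ y) (frameComb A X₁ X₂ X₃ z) =
      frameComb A X₁ X₂ X₃ (milnorCurv l x y z) := by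
  simp only [curv, nabla_frameComb hON hl, bracket_frameComb hl, frameComb_sub, milnorCurv]

end Frame

end GeomFrame

/-- the sectional curvature `g(R(X,Y)Y,X)` of the plane spanned by
`X = cosθ X₁ + sinθ X₂` and `Y = -sinφ sinθ X₁ + sinφ cosθ X₂ + cosφ X₃` equals
`cos²φ (c²/4) + sin²φ (ck - 3c²/4)`; in particular it is independent of `θ`,
the curvature of any plane containing `X₃` (case `φ = 0`) is `c²/4` and the
curvature of the plane orthogonal to `X₃` (case `φ = π/2`) is `ck - 3c²/4`. -/
theorem sectional_curvature_of_top_frame {A V : Type} [CommRing A]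
    [Algebra ℝ A] [AddCommGroup V] [Module A V] (F : GeomFrame A V)
    (X₁ X₂ X₃ : V) (hON : F.IsONFrame X₁ X₂ X₃) (c k : ℝ)
    (h12 : F.bracket X₁ X₂ = algebraMap ℝ A c • X₃)
    (h23 : F.bracket X₂ X₃ = algebraMap ℝ A k • X₁)
    (h31 : F.bracket X₃ X₁ = algebraMap ℝ A k • X₂)
    (θ φ : ℝ) (X Y : V)
    (hX : X = algebraMap ℝ A (Real.cos θ) • X₁ + algebraMap ℝ A (Real.sin θ) • X₂)
    (hY : Y = algebraMap ℝ A (-(Real.sin φ * Real.sin θ)) • X₁ +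
        algebraMap ℝ A (Real.sin φ * Real.cos θ) • X₂ +
        algebraMap ℝ A (Real.cos φ) • X₃) :
    F.g (F.curv X Y Y) X =
      algebraMap ℝ A (Real.cos φ ^ 2 * (c ^ 2 / 4) +
        Real.sin φ ^ 2 * (c * k - 3 * c ^ 2 / 4)) := by
  open Real GeomFrame in
  set x : Fin 3 → ℝ := ![cos θ, sin θ, 0]
  set y : Fin 3 → ℝ := ![-(sin φ * sin θ), sin φ * cos θ, cos φ]
  have hX' : X = frameComb A X₁ X₂ X₃ x := by simp [hX, frameComb, x]
  have hY' : Y = frameComb A X₁ X₂ X₃ y := hY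
  have hl : F.HasMilnorBrackets X₁ X₂ X₃ ![k, k, c] := ⟨h23, h31, h12⟩
  have hxy : x ⨯₃ y = ![sin θ * cos φ, -(cos θ * cos φ), sin φ] := by
    ext i
    fin_cases i <;> simp [x, y, cross_apply]
    linear_combination sin φ * sin_sq_add_cos_sq θ
  rw [hX', hY', curv_frameComb hON hl, g_frameComb hON, milnorCurv_dotProduct, hxy]
  congr 1
  simp only [milnorSectional, milnorCoeff, Fin.sum_univ_three, cons_val_zero, cons_val_one,
    cons_val, Fin.reduceAdd]
  linear_combination (c ^ 2 / 4 * cos φ ^ 2) * sin_sq_add_cos_sq θ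
end

section
/- On S³, the unit sphere of the quaternions ℍ, let v be the Killing field v_q = a₁qi + a₂qj + a₃qk + b₁iq + b₂jq + b₃kq for real constants a_i, b_i, for the round metric. Then v is a geodesic vector field (∇_v v = 0 where v ≠ 0 means: all integral curves are geodesics, equivalently v has constant coefficients in the right- or left-invariant frame) if and only if a₁ = a₂ = a₃ = 0 or b₁ = b₂ = b₃ = 0. -/
/-!
Write `α = a₀i + a₁j + a₂k` and `β = b₀i + b₁j + b₂k`, so that `v q = q α + β q`.
If `v q = q γ` on `S³`, then `q = 1` gives `γ = α + β`, hence `β q = q β` for every unit `q`;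
taking `q = i, j` shows that `β` is real, and being imaginary it vanishes. Symmetrically,
`v q = γ q` on `S³` forces `α = 0`.
-/

open scoped Quaternion

def qI : ℍ[ℝ] := ⟨0, 1, 0, 0⟩
def qJ : ℍ[ℝ] := ⟨0, 0, 1, 0⟩
def qK : ℍ[ℝ] := ⟨0, 0, 0, 1⟩

open Metric Quaternion

def imQuat (x y z : ℝ) : ℍ[ℝ] := ⟨0, x, y, z⟩

lemma imQuat_eq (x y z : ℝ) : imQuat x y z = x • qI + y • qJ + z • qK := by
  ext <;> simp <;> simp [imQuat, qI, qJ, qK]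

lemma smul_mul_qI_add_eq_mul_imQuat (x y z : ℝ) (q : ℍ[ℝ]) :
    x • (q * qI) + y • (q * qJ) + z • (q * qK) = q * imQuat x y z := by
  rw [imQuat_eq, mul_add, mul_add, mul_smul_comm, mul_smul_comm, mul_smul_comm]

lemma smul_qI_mul_add_eq_imQuat_mul (x y z : ℝ) (q : ℍ[ℝ]) :
    x • (qI * q) + y • (qJ * q) + z • (qK * q) = imQuat x y z * q := by
  rw [imQuat_eq, add_mul, add_mul, smul_mul_assoc, smul_mul_assoc, smul_mul_assoc]

lemma imQuat_eq_zero_iff (c : Fin 3 → ℝ) : imQuat (c 0) (c 1) (c 2) = 0 ↔ c = 0 := by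
  rw [Quaternion.ext_iff]
  simp [imQuat, funext_iff, Fin.forall_fin_succ]

lemma norm_qI : ‖qI‖ = 1 := by
  rw [norm_eq_sqrt_real_inner, inner_self, normSq_def']
  simp [qI]

lemma norm_qJ : ‖qJ‖ = 1 := by
  rw [norm_eq_sqrt_real_inner, inner_self, normSq_def']
  simp [qJ]

lemma eq_zero_of_re_eq_zero_of_commute_qI_qJ {x : ℍ[ℝ]} (hre : x.re = 0)
    (hI : Commute x qI) (hJ : Commute x qJ) : x = 0 := by
  rw [commute_iff_eq, Quaternion.ext_iff] at hI hJ
  simp only [re_mul, imI_mul, imJ_mul, imK_mul] at hI hJ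
  simp [qI, qJ] at hI hJ
  ext <;> simp <;> linarith

lemma commute_of_forall_sphere_mul_add_mul_eq_mul {α β γ : ℍ[ℝ]}
    (h : ∀ q ∈ sphere (0 : ℍ[ℝ]) 1, q * α + β * q = q * γ) {q : ℍ[ℝ]} (hq : ‖q‖ = 1) :
    Commute β q := by
  have h₁ := h 1 (by simp)
  simp only [one_mul, mul_one] at h₁
  have hq := h q (mem_sphere_zero_iff_norm.2 hq)
  rw [← h₁, mul_add] at hq
  exact add_left_cancel hq

lemma commute_of_forall_sphere_mul_add_mul_eq_mul' {α β γ : ℍ[ℝ]}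
    (h : ∀ q ∈ sphere (0 : ℍ[ℝ]) 1, q * α + β * q = γ * q) {q : ℍ[ℝ]} (hq : ‖q‖ = 1) :
    Commute α q := by
  have h₁ := h 1 (by simp)
  simp only [one_mul, mul_one] at h₁
  have hq := h q (mem_sphere_zero_iff_norm.2 hq)
  rw [← h₁, add_mul] at hq
  exact (add_right_cancel hq).symm

/-- the Killing field
`v_q = a₁qi + a₂qj + a₃qk + b₁iq + b₂jq + b₃kq` on `S³` is geodesic — i.e. it has
constant coefficients in the left-invariant frame `(qi, qj, qk)` or in the
right-invariant frame `(iq, jq, kq)` — if and only if `a = 0` or `b = 0`. -/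
theorem sphere_killing_field_geodesic_iff (a b : Fin 3 → ℝ) (v : ℍ[ℝ] → ℍ[ℝ])
    (hv : v = fun q => a 0 • (q * qI) + a 1 • (q * qJ) + a 2 • (q * qK) +
      b 0 • (qI * q) + b 1 • (qJ * q) + b 2 • (qK * q)) :
    ((∃ x y z : ℝ, ∀ q ∈ Metric.sphere (0 : ℍ[ℝ]) 1,
        v q = x • (q * qI) + y • (q * qJ) + z • (q * qK)) ∨
      (∃ x y z : ℝ, ∀ q ∈ Metric.sphere (0 : ℍ[ℝ]) 1,
        v q = x • (qI * q) + y • (qJ * q) + z • (qK * q))) ↔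
      (a = 0 ∨ b = 0) := by
  have hv_frames : ∀ q, v q = q * imQuat (a 0) (a 1) (a 2) + imQuat (b 0) (b 1) (b 2) * q := by
    intro q
    rw [hv, ← smul_mul_qI_add_eq_mul_imQuat, ← smul_qI_mul_add_eq_imQuat_mul]
    dsimp only
    abel
  simp only [hv_frames, smul_mul_qI_add_eq_mul_imQuat, smul_qI_mul_add_eq_imQuat_mul]
  constructor
  · rintro (⟨x, y, z, h⟩ | ⟨x, y, z, h⟩)
    · exact Or.inr <| (imQuat_eq_zero_iff b).1 <| eq_zero_of_re_eq_zero_of_commute_qI_qJ rfl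
        (commute_of_forall_sphere_mul_add_mul_eq_mul h norm_qI)
        (commute_of_forall_sphere_mul_add_mul_eq_mul h norm_qJ)
    · exact Or.inl <| (imQuat_eq_zero_iff a).1 <| eq_zero_of_re_eq_zero_of_commute_qI_qJ rfl
        (commute_of_forall_sphere_mul_add_mul_eq_mul' h norm_qI)
        (commute_of_forall_sphere_mul_add_mul_eq_mul' h norm_qJ)
  · rintro (rfl | rfl)
    · exact Or.inr ⟨b 0, b 1, b 2, fun q _ => by simp [imQuat_eq]⟩
    · exact Or.inl ⟨a 0, a 1, a 2, fun q _ => by simp [imQuat_eq]⟩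
end
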